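/- arXiv:2112.09811 — 2 statements merged into one kernel-verified Lean document; each statement's English description precedes it below -/
import Mathlib

section
/- Let G be a stochastic game that is stopping under fairness with terminal set T, let σ1 be a memoryless strategy for Player 1 and σ2 a memoryless fair strategy for Player 2. Then for every v ∈ V, Σ_{N=1}^∞ Σ_{ŵ ∈ (V∖T)^N} Prob^{σ1,σ2}_{G,v}(ŵ) < ∞, where the inner sum ranges over all finite sequences ŵ of length N consisting of non-terminal vertices and Prob^{σ1,σ2}_{G,v}(ŵ) denotes the measure of the cylinder of ŵ. -/
open MeasureTheory
open scoped ENNReal Classical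

/-- A turn-based two-player stochastic game on a finite vertex set `V`. -/
structure StochGame (V : Type*) [Fintype V] where
  /-- Player 1 vertices -/
  V1 : Finset V
  /-- Player 2 vertices -/
  V2 : Finset V
  /-- probabilistic vertices -/
  VP : Finset V
  cover : ∀ v : V, v ∈ V1 ∨ v ∈ V2 ∨ v ∈ VP
  disj12 : ∀ v : V, ¬(v ∈ V1 ∧ v ∈ V2)
  disj1P : ∀ v : V, ¬(v ∈ V1 ∧ v ∈ VP)
  disj2P : ∀ v : V, ¬(v ∈ V2 ∧ v ∈ VP)
  /-- the probabilistic transition function -/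
  δ : V → V → ℝ
  δ_nonneg : ∀ v v', 0 ≤ δ v v'
  δ_le_one : ∀ v v', δ v v' ≤ 1
  det : ∀ v : V, (v ∈ V1 ∨ v ∈ V2) → ∀ v', δ v v' = 0 ∨ δ v v' = 1
  prob : ∀ v ∈ VP, ∑ v' : V, δ v v' = 1
  post_nonempty : ∀ v : V, ∃ v', 0 < δ v v'

namespace StochGame

variable {V : Type*} [Fintype V]

/-- successors of a vertex -/
def post (G : StochGame V) (v : V) : Set V := {v' | 0 < G.δ v v'}

/-- a vertex is terminal if `δ(v,v) = 1` and `δ(v,v') = 0` for `v' ≠ v`. -/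
def Terminal (G : StochGame V) (v : V) : Prop :=
  G.δ v v = 1 ∧ ∀ v', v' ≠ v → G.δ v v' = 0

/-- A strategy for the player owning the vertices in `P`: a function assigning to each
finite history and current vertex a probability distribution over vertices, supported
on successors when the current vertex belongs to `P`. -/
structure Strategy (G : StochGame V) (P : Finset V) where
  f : List V → V → V → ℝ
  nonneg : ∀ h v v', 0 ≤ f h v v'
  sum_one : ∀ h v, ∑ v' : V, f h v v' = 1
  support : ∀ h v, v ∈ P → ∀ v', 0 < f h v v' → 0 < G.δ v v'

variable {G : StochGame V} {P : Finset V}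

/-- a memoryless strategy only depends on the current vertex -/
def Strategy.Memoryless (σ : Strategy G P) : Prop :=
  ∀ h h' cur, σ.f h cur = σ.f h' cur

/-- a deterministic (pure) strategy takes Dirac distributions as values -/
def Strategy.Deterministic (σ : Strategy G P) : Prop :=
  ∀ h cur, ∃ v', ∀ u, σ.f h cur u = if u = v' then 1 else 0

/-- a semi-Markov strategy depends only on the initial vertex, the number of elapsed
steps and the current vertex -/
def Strategy.SemiMarkov (σ : Strategy G P) : Prop :=
  ∀ (v0 : V) (h h' : List V) (cur : V), h.length = h'.length →
    σ.f (v0 :: h) cur = σ.f (v0 :: h') cur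

variable [DecidableEq V]

/-- one-step transition probability given strategies of both players -/
noncomputable def step (G : StochGame V) (σ1 : Strategy G G.V1) (σ2 : Strategy G G.V2)
    (h : List V) (v v' : V) : ℝ :=
  if v ∈ G.V1 then σ1.f h v v' else if v ∈ G.V2 then σ2.f h v v' else G.δ v v'

/-- the history consisting of the first `i` vertices of `w` -/
def hist (w : ℕ → V) (i : ℕ) : List V := (List.range i).map w

/-- probability that the play starts with the vertices `w 0, w 1, …, w n` when
the game starts at `v` and the players use strategies `σ1`, `σ2`. -/
noncomputable def prefixProb (G : StochGame V) (σ1 : Strategy G G.V1) (σ2 : Strategy G G.V2)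
    (v : V) (n : ℕ) (w : ℕ → V) : ℝ :=
  (if w 0 = v then 1 else 0) *
    ∏ i ∈ Finset.range n, G.step σ1 σ2 (hist w i) (w i) (w (i + 1))

/-- the cylinder of all infinite plays agreeing with `w` on the first `n+1` coordinates -/
def cyl (n : ℕ) (w : ℕ → V) : Set (ℕ → V) := {ω | ∀ i ≤ n, ω i = w i}

variable [MeasurableSpace V]

/-- `μ` is the path measure of the game `G` starting at `v` under strategies `σ1, σ2`:
it is the (unique) probability measure on `V^ω` (with the product σ-algebra) whose
cylinder probabilities are given by the products of the transition probabilities. -/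
def IsPathMeasure (G : StochGame V) (σ1 : Strategy G G.V1) (σ2 : Strategy G G.V2)
    (v : V) (μ : Measure (ℕ → V)) : Prop :=
  IsProbabilityMeasure μ ∧
    ∀ (n : ℕ) (w : ℕ → V), μ (cyl n w) = ENNReal.ofReal (G.prefixProb σ1 σ2 v n w)

/-- the set of vertices occurring infinitely often in a play -/
def infOcc (ω : ℕ → V) : Set V := {u | ∀ N, ∃ n, N ≤ n ∧ ω n = u}

/-- the set of plays that are fair for Player 2 -/
def FP2 (G : StochGame V) : Set (ℕ → V) :=
  {ω | ∀ u ∈ G.V2, u ∈ infOcc ω → ∀ u' ∈ G.post u, u' ∈ infOcc ω}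

/-- the event `◇T` that a terminal vertex is reached -/
def ReachT (G : StochGame V) : Set (ℕ → V) := {ω | ∃ i, G.Terminal (ω i)}

/-- A Player 2 strategy is (almost surely) fair if the fair plays have probability 1
under any Player 1 strategy and any initial vertex. -/
def Fair (G : StochGame V) (σ2 : Strategy G G.V2) : Prop :=
  ∀ (σ1 : Strategy G G.V1) (v : V) (μ : Measure (ℕ → V)),
    G.IsPathMeasure σ1 σ2 v μ → μ G.FP2 = 1

/-- `G` is stopping under fairness: a terminal vertex is reached almost surely
whenever Player 2 plays a fair strategy. -/
def StoppingUnderFairness (G : StochGame V) : Prop :=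
  ∀ (σ1 : Strategy G G.V1) (σ2 : Strategy G G.V2), G.Fair σ2 →
    ∀ (v : V) (μ : Measure (ℕ → V)), G.IsPathMeasure σ1 σ2 v μ → μ G.ReachT = 1

/-- the total accumulated reward of a play -/
noncomputable def rew (r : V → ℝ) (ω : ℕ → V) : ℝ≥0∞ := ∑' i, ENNReal.ofReal (r (ω i))

/-- the expected total reward -/
noncomputable def expRew (μ : Measure (ℕ → V)) (r : V → ℝ) : ℝ≥0∞ := ∫⁻ ω, rew r ω ∂μ

end StochGame

/-!
Under memoryless strategies the play is a Markov chain on the finite set `V` with kernel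
`stepKernel`, and the sum in question is `∑ N, P(τ > N)`, `τ` the hitting time of `T`.
Since `T` is hit almost surely, every vertex that is visited with positive probability before `T`
has a path of positive probability into `T`. By finiteness there are then `m` and `c < 1` such that
from every such vertex the chain stays outside `T` for `m` steps with probability at most `c`,
so `P(τ > N)` decays geometrically.
-/

open MeasureTheory Finset
open scoped NNReal

theorem Fin.clamp_val {m : ℕ} (i : Fin (m + 1)) : Fin.clamp i m = i :=
  Fin.ext (min_eq_left (Nat.lt_succ_iff.1 i.2))

namespace StochGame

section Survival

variable {V : Type*}

noncomputable def wordWeight (q : V → V → ℝ≥0) (u : V) {n : ℕ} (w : Fin (n + 1) → V) : ℝ≥0 :=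
  if w 0 = u then ∏ i : Fin n, q (w i.castSucc) (w i.succ) else 0

theorem wordWeight_eq_zero_of_ne {q : V → V → ℝ≥0} {u : V} {n : ℕ} {w : Fin (n + 1) → V}
    (h : w 0 ≠ u) : wordWeight q u w = 0 :=
  if_neg h

theorem wordWeight_cons {q : V → V → ℝ≥0} (u a : V) {n : ℕ} (t : Fin (n + 1) → V) :
    wordWeight q u (Fin.cons a t : Fin (n + 2) → V) =
      if a = u then q a (t 0) * wordWeight q (t 0) t else 0 := by
  simp only [wordWeight, Fin.cons_zero, if_true, Fin.prod_univ_succ, Fin.castSucc_zero,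
    ← Fin.succ_castSucc, Fin.cons_succ]

variable [Fintype V]

noncomputable def survivalProb (q : V → V → ℝ≥0) (B : Set V) : ℕ → V → ℝ≥0
  | 0, u => if u ∈ B then 1 else 0
  | n + 1, u => if u ∈ B then ∑ u', q u u' * survivalProb q B n u' else 0

variable {q : V → V → ℝ≥0} {B : Set V}

theorem survivalProb_eq_zero_of_notMem {u : V} (hu : u ∉ B) (n : ℕ) :
    survivalProb q B n u = 0 := by
  cases n <;> simp [survivalProb, hu]

theorem survivalProb_le_one (hq : ∀ u, ∑ u', q u u' ≤ 1) (n : ℕ) (u : V) :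
    survivalProb q B n u ≤ 1 := by
  induction n generalizing u with
  | zero => unfold survivalProb; split_ifs <;> simp
  | succ n ih =>
    unfold survivalProb
    split_ifs
    · calc ∑ u', q u u' * survivalProb q B n u' ≤ ∑ u', q u u' :=
            sum_le_sum fun u' _ => mul_le_of_le_one_right' (ih u')
        _ ≤ 1 := hq u
    · exact zero_le_one

theorem survivalProb_succ_le (hq : ∀ u, ∑ u', q u u' ≤ 1) (n : ℕ) (u : V) :
    survivalProb q B (n + 1) u ≤ survivalProb q B n u := by
  induction n generalizing u with
  | zero =>
    by_cases hu : u ∈ B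
    · simpa [survivalProb, hu] using survivalProb_le_one (B := B) hq 1 u
    · simp [survivalProb_eq_zero_of_notMem hu]
  | succ n ih =>
    unfold survivalProb
    split_ifs
    · exact sum_le_sum fun u' _ => mul_le_mul_right (ih u') _
    · exact le_rfl

theorem survivalProb_antitone (hq : ∀ u, ∑ u', q u u' ≤ 1) (u : V) :
    Antitone (survivalProb q B · u) :=
  antitone_nat_of_succ_le fun n => survivalProb_succ_le hq n u

theorem survivalProb_add_le {m : ℕ} {c : ℝ≥0} (hc : ∀ u, survivalProb q B m u ≤ c) (n : ℕ)
    (u : V) : survivalProb q B (n + m) u ≤ survivalProb q B n u * c := by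
  induction n generalizing u with
  | zero =>
    by_cases hu : u ∈ B
    · simpa [survivalProb, hu] using hc u
    · simp [survivalProb_eq_zero_of_notMem hu]
  | succ n ih =>
    rw [Nat.add_right_comm]
    unfold survivalProb
    split_ifs
    · rw [sum_mul]
      exact sum_le_sum fun u' _ => by rw [mul_assoc]; exact mul_le_mul_right (ih u') _
    · simp

theorem exists_survivalProb_lt_one (hq : ∀ u, ∑ u', q u u' ≤ 1) {u t : V}
    (hut : Relation.ReflTransGen (fun a b => q a b ≠ 0) u t) (ht : t ∉ B) :
    ∃ n, survivalProb q B n u < 1 := by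
  induction hut using Relation.ReflTransGen.head_induction_on with
  | refl => exact ⟨0, by simp [survivalProb, ht]⟩
  | @head a b hab _ ih =>
    obtain ⟨n, hn⟩ := ih
    refine ⟨n + 1, ?_⟩
    unfold survivalProb
    split_ifs
    · calc ∑ u', q a u' * survivalProb q B n u' < ∑ u', q a u' := by
            refine sum_lt_sum (fun u' _ => mul_le_of_le_one_right' (survivalProb_le_one hq n u'))
              ⟨b, mem_univ b, ?_⟩
            exact mul_lt_of_lt_one_right (pos_iff_ne_zero.2 hab) hn
        _ ≤ 1 := hq a
    · exact zero_lt_one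

theorem exists_forall_survivalProb_le_lt_one (hq : ∀ u, ∑ u', q u u' ≤ 1)
    (hesc : ∀ u, ∃ n, survivalProb q B n u < 1) :
    ∃ m, ∃ c < 1, ∀ u, survivalProb q B m u ≤ c := by
  choose n hn using hesc
  let m := univ.sup n
  refine ⟨m, univ.sup (survivalProb q B m), ?_, fun u => le_sup (mem_univ u)⟩
  refine (Finset.sup_lt_iff zero_lt_one).2 fun u _ => ?_
  exact (survivalProb_antitone hq u (le_sup (mem_univ u))).trans_lt (hn u)

theorem summable_survivalProb (hq : ∀ u, ∑ u', q u u' ≤ 1)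
    (hesc : ∀ u, ∃ n, survivalProb q B n u < 1) (v : V) :
    Summable (survivalProb q B · v) := by
  obtain ⟨m, c, hc1, hc⟩ := exists_forall_survivalProb_le_lt_one hq hesc
  set S : ℕ → ℝ≥0 := fun K => ∑ N ∈ range K, survivalProb q B N v
  have hrec (K : ℕ) : S (m + K) ≤ m + c * S (m + K) := by
    calc S (m + K) = S m + ∑ N ∈ range K, survivalProb q B (m + N) v := sum_range_add _ _ _
      _ ≤ m + c * S K := by
          gcongr
          · simpa using sum_le_sum fun N (_ : N ∈ range m) => survivalProb_le_one hq N v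
          · rw [mul_sum]
            exact sum_le_sum fun N _ => by
              rw [add_comm, mul_comm]; exact survivalProb_add_le hc N v
      _ ≤ m + c * S (m + K) := by
          gcongr; exact sum_le_sum_of_subset (range_mono (Nat.le_add_left K m))
  refine NNReal.summable_of_sum_range_le (c := m / (1 - c)) fun K => ?_
  refine (sum_le_sum_of_subset (range_mono (Nat.le_add_left K m))).trans ?_
  rw [le_div_iff₀ (tsub_pos_of_lt hc1), mul_tsub, mul_one, tsub_le_iff_right, mul_comm]
  exact hrec K

theorem sum_wordWeight_eq_survivalProb (n : ℕ) (u : V) :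
    ∑ w : Fin (n + 1) → V, (if ∀ i, w i ∈ B then wordWeight q u w else 0) =
      survivalProb q B n u := by
  induction n generalizing u with
  | zero =>
    rw [← (Equiv.funUnique (Fin 1) V).symm.sum_comp]
    simp only [Equiv.funUnique_symm_apply, wordWeight, univ_eq_empty, prod_empty, survivalProb]
    rw [sum_eq_single u (fun x _ hx => by simp [hx]) (by simp)]
    simp
  | succ n ih =>
    have hcons (a : V) (t : Fin (n + 1) → V) :
        (if ∀ i, (Fin.cons a t : Fin (n + 2) → V) i ∈ B then
          wordWeight q u (Fin.cons a t : Fin (n + 2) → V) else 0) =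
        if a = u then
          if u ∈ B then q u (t 0) * (if ∀ i, t i ∈ B then wordWeight q (t 0) t else 0) else 0
        else 0 := by
      simp only [Fin.forall_fin_succ (P := fun i => (Fin.cons a t : Fin (n + 2) → V) i ∈ B),
        Fin.cons_zero, Fin.cons_succ, wordWeight_cons]
      split_ifs <;> simp_all
    have hhead (t : Fin (n + 1) → V) :
        q u (t 0) * (if ∀ i, t i ∈ B then wordWeight q (t 0) t else 0) =
          ∑ u', q u u' * (if ∀ i, t i ∈ B then wordWeight q u' t else 0) := by
      rw [sum_eq_single (t 0)]
      · intro u' _ hu'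
        simp [wordWeight_eq_zero_of_ne (Ne.symm hu')]
      · simp
    calc _ = ∑ a, ∑ t : Fin (n + 1) → V,
          (if ∀ i, (Fin.cons a t : Fin (n + 2) → V) i ∈ B then
            wordWeight q u (Fin.cons a t : Fin (n + 2) → V) else 0) := by
          rw [← (Fin.consEquiv fun _ => V).sum_comp, Fintype.sum_prod_type]; rfl
      _ = if u ∈ B then ∑ u', q u u' * survivalProb q B n u' else 0 := by
          simp only [hcons]
          rw [sum_comm]
          simp only [sum_ite_eq', mem_univ, if_true]
          split_ifs
          · simp only [hhead, ← ih, mul_sum]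
            exact sum_comm
          · simp
      _ = survivalProb q B (n + 1) u := rfl

end Survival

section Cylinder

variable {V : Type*}

theorem cyl_anti {m n : ℕ} (hmn : m ≤ n) (w : ℕ → V) : cyl n w ⊆ cyl m w :=
  fun _ hω i hi => hω i (hi.trans hmn)

theorem setOf_forall_fin_eq_cyl {n : ℕ} (w : Fin (n + 1) → V) :
    {ω : ℕ → V | ∀ i : Fin (n + 1), ω i = w i} = cyl n (fun k => w (Fin.clamp k n)) := by
  ext ω
  simp only [Set.mem_ofPred_eq, cyl, Fin.forall_iff, Nat.lt_succ_iff]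
  refine forall₂_congr fun i hi => ?_
  rw [show Fin.clamp i n = ⟨i, Nat.lt_succ_of_le hi⟩ from Fin.ext (min_eq_left hi)]

theorem ae_measure_cyl_ne_zero [MeasurableSpace V] [Countable V] (μ : Measure (ℕ → V)) :
    ∀ᵐ ω ∂μ, ∀ n, μ (cyl n ω) ≠ 0 := by
  refine ae_all_iff.2 fun n => ?_
  let π : (ℕ → V) → Fin (n + 1) → V := fun ω i => ω i
  have hcyl (ω : ℕ → V) : cyl n ω = π ⁻¹' {π ω} := by
    ext ω'
    simp [cyl, π, funext_iff, Fin.forall_iff]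
  let S : Set (Fin (n + 1) → V) := {x | μ (π ⁻¹' {x}) = 0}
  refine measure_mono_null (fun ω hω => ?_)
    ((measure_biUnion_null_iff S.to_countable).2 fun x hx => hx)
  exact Set.mem_biUnion (x := π ω) (by simpa [S, hcyl] using hω) rfl

end Cylinder

section MarkovChain

variable {V : Type*} [MeasurableSpace V] {q : V → V → ℝ≥0} {v : V} {μ : Measure (ℕ → V)}
  {T : Set V}

def IsMarkovChainFrom (q : V → V → ℝ≥0) (v : V) (μ : Measure (ℕ → V)) : Prop :=
  ∀ n w, μ (cyl n w) = ((if w 0 = v then ∏ i ∈ range n, q (w i) (w (i + 1)) else 0 : ℝ≥0) : ℝ≥0∞)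

theorem IsMarkovChainFrom.ne_zero_of_measure_cyl_ne_zero (hμ : IsMarkovChainFrom q v μ)
    {m : ℕ} {ω : ℕ → V} (h : μ (cyl m ω) ≠ 0) {i : ℕ} (hi : i < m) :
    q (ω i) (ω (i + 1)) ≠ 0 := by
  rw [hμ, ENNReal.coe_ne_zero, ite_ne_right_iff] at h
  exact prod_ne_zero_iff.1 h.2 i (mem_range.2 hi)

theorem IsMarkovChainFrom.measure_setOf_forall_fin_eq (hμ : IsMarkovChainFrom q v μ) {n : ℕ}
    (w : Fin (n + 1) → V) :
    μ {ω : ℕ → V | ∀ i : Fin (n + 1), ω i = w i} = wordWeight q v w := by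
  rw [setOf_forall_fin_eq_cyl, hμ, wordWeight, ← Fin.prod_univ_eq_prod_range]
  have hcast (i : Fin n) : Fin.clamp i n = i.castSucc := Fin.clamp_val i.castSucc
  have hsucc (i : Fin n) : Fin.clamp (i + 1) n = i.succ := Fin.clamp_val i.succ
  simp only [hcast, hsucc]
  rfl

def visitedAvoiding (μ : Measure (ℕ → V)) (T : Set V) : Set V :=
  {u | ∃ n w, (∀ i ≤ n, w i ∉ T) ∧ w n = u ∧ μ (cyl n w) ≠ 0}

theorem notMem_of_mem_visitedAvoiding {u : V} (hu : u ∈ visitedAvoiding μ T) : u ∉ T := by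
  obtain ⟨n, w, hwT, rfl, -⟩ := hu
  exact hwT n le_rfl

theorem mem_visitedAvoiding_of_measure_ne_zero {n : ℕ} {w : Fin (n + 1) → V}
    (hwT : ∀ i, w i ∉ T) (hw : μ {ω : ℕ → V | ∀ i : Fin (n + 1), ω i = w i} ≠ 0)
    (i : Fin (n + 1)) : w i ∈ visitedAvoiding μ T := by
  rw [setOf_forall_fin_eq_cyl] at hw
  refine ⟨i, fun k => w (Fin.clamp k n), fun k _ => hwT _, congrArg w (Fin.clamp_val i), ?_⟩
  exact fun h0 => hw (measure_mono_null (cyl_anti (Nat.lt_succ_iff.1 i.2) _) h0)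

theorem IsMarkovChainFrom.exists_reflTransGen_of_mem_visitedAvoiding [Countable V]
    (hμ : IsMarkovChainFrom q v μ) (hT : ∀ᵐ ω ∂μ, ∃ i, ω i ∈ T) {u : V}
    (hu : u ∈ visitedAvoiding μ T) :
    ∃ t ∈ T, Relation.ReflTransGen (fun a b => q a b ≠ 0) u t := by
  obtain ⟨n, w, hwT, rfl, hw⟩ := hu
  obtain ⟨ω, hωw, ⟨i, hi⟩, hpos⟩ := Measure.exists_mem_of_measure_ne_zero_of_ae hw
    (ae_restrict_of_ae (hT.and (ae_measure_cyl_ne_zero μ)))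
  have hni : n ≤ i := by
    by_contra! h
    exact hwT i h.le (hωw i h.le ▸ hi)
  have hpath : Relation.ReflTransGen (fun a b => q (ω a) (ω b) ≠ 0) n i :=
    reflTransGen_of_succ_of_le _ (fun k hk => hμ.ne_zero_of_measure_cyl_ne_zero (hpos i) hk.2) hni
  exact ⟨ω i, hi, hωw n le_rfl ▸ hpath.lift ω fun _ _ h => h⟩

variable [Fintype V]

theorem IsMarkovChainFrom.tsum_measure_avoiding_eq_survivalProb (hμ : IsMarkovChainFrom q v μ)
    (N : ℕ) :
    ∑' w : {w : Fin (N + 1) → V // ∀ i, w i ∉ T},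
      μ {ω : ℕ → V | ∀ i : Fin (N + 1), ω i = w.1 i} =
      survivalProb q (visitedAvoiding μ T) N v := by
  have hcond (w : Fin (N + 1) → V) :
      (if ∀ i, w i ∉ T then μ {ω : ℕ → V | ∀ i : Fin (N + 1), ω i = w i} else 0) =
        if ∀ i, w i ∈ visitedAvoiding μ T then
          μ {ω : ℕ → V | ∀ i : Fin (N + 1), ω i = w i} else 0 := by
    by_cases h0 : μ {ω : ℕ → V | ∀ i : Fin (N + 1), ω i = w i} = 0
    · simp [h0]
    by_cases hwT : ∀ i, w i ∉ T
    · rw [if_pos hwT, if_pos (mem_visitedAvoiding_of_measure_ne_zero hwT h0)]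
    · rw [if_neg hwT, if_neg fun hB => hwT fun i => notMem_of_mem_visitedAvoiding (hB i)]
  refine (_root_.tsum_subtype {w : Fin (N + 1) → V | ∀ i, w i ∉ T}
    fun w => μ {ω : ℕ → V | ∀ i : Fin (N + 1), ω i = w i}).trans ?_
  rw [tsum_fintype, ← sum_wordWeight_eq_survivalProb, ENNReal.ofNNReal_finsetSum]
  refine sum_congr rfl fun w _ => ?_
  simp only [Set.indicator_apply, Set.mem_ofPred_eq]
  rw [hcond, apply_ite ((↑) : ℝ≥0 → ℝ≥0∞), hμ.measure_setOf_forall_fin_eq, ENNReal.coe_zero]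

theorem IsMarkovChainFrom.tsum_measure_avoiding_lt_top (hq : ∀ a, ∑ b, q a b ≤ 1)
    (hμ : IsMarkovChainFrom q v μ) (hT : ∀ᵐ ω ∂μ, ∃ i, ω i ∈ T) :
    ∑' N : ℕ, ∑' w : {w : Fin (N + 1) → V // ∀ i, w i ∉ T},
      μ {ω : ℕ → V | ∀ i : Fin (N + 1), ω i = w.1 i} < ⊤ := by
  have hesc (u : V) : ∃ n, survivalProb q (visitedAvoiding μ T) n u < 1 := by
    by_cases hu : u ∈ visitedAvoiding μ T
    · obtain ⟨t, ht, hut⟩ := hμ.exists_reflTransGen_of_mem_visitedAvoiding hT hu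
      exact exists_survivalProb_lt_one hq hut fun htB => notMem_of_mem_visitedAvoiding htB ht
    · exact ⟨0, by simp [survivalProb_eq_zero_of_notMem hu]⟩
  simp_rw [hμ.tsum_measure_avoiding_eq_survivalProb]
  exact (ENNReal.tsum_coe_ne_top_iff_summable.2 (summable_survivalProb hq hesc v)).lt_top

end MarkovChain

theorem measurableSet_reachT {V : Type*} [Fintype V] [MeasurableSpace V]
    [DiscreteMeasurableSpace V] (G : StochGame V) : MeasurableSet G.ReachT := by
  rw [ReachT, Set.ofPred_exists]
  exact MeasurableSet.iUnion fun i =>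
    measurableSet_preimage (t := {t | G.Terminal t}) (measurable_pi_apply i) .of_discrete

section Game

variable {V : Type*} [Fintype V] [DecidableEq V] {G : StochGame V} {σ1 : Strategy G G.V1}
  {σ2 : Strategy G G.V2}

theorem step_nonneg (h : List V) (a b : V) : 0 ≤ G.step σ1 σ2 h a b := by
  unfold step
  split_ifs
  exacts [σ1.nonneg h a b, σ2.nonneg h a b, G.δ_nonneg a b]

theorem sum_step (h : List V) (a : V) : ∑ b, G.step σ1 σ2 h a b = 1 := by
  unfold step
  rcases G.cover a with ha | ha | ha
  · simp only [ha, if_true]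
    exact σ1.sum_one h a
  · have ha1 : a ∉ G.V1 := fun ha1 => G.disj12 a ⟨ha1, ha⟩
    simp only [ha1, ha, if_true, if_false]
    exact σ2.sum_one h a
  · have ha1 : a ∉ G.V1 := fun ha1 => G.disj1P a ⟨ha1, ha⟩
    have ha2 : a ∉ G.V2 := fun ha2 => G.disj2P a ⟨ha2, ha⟩
    simp only [ha1, ha2, if_false]
    exact G.prob a ha

theorem step_eq_step_nil (h1 : σ1.Memoryless) (h2 : σ2.Memoryless) (h : List V) (a b : V) :
    G.step σ1 σ2 h a b = G.step σ1 σ2 [] a b := by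
  unfold step
  rw [h1 h [] a, h2 h [] a]

noncomputable def stepKernel (G : StochGame V) (σ1 : Strategy G G.V1) (σ2 : Strategy G G.V2)
    (a b : V) : ℝ≥0 :=
  (G.step σ1 σ2 [] a b).toNNReal

theorem sum_stepKernel (a : V) : ∑ b, stepKernel G σ1 σ2 a b = 1 := by
  simp only [stepKernel]
  rw [← Real.toNNReal_sum_of_nonneg fun b _ => step_nonneg [] a b, sum_step, Real.toNNReal_one]

theorem IsPathMeasure.isMarkovChainFrom [MeasurableSpace V] {v : V} {μ : Measure (ℕ → V)}
    (hμ : G.IsPathMeasure σ1 σ2 v μ) (h1 : σ1.Memoryless) (h2 : σ2.Memoryless) :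
    IsMarkovChainFrom (stepKernel G σ1 σ2) v μ := by
  intro n w
  rw [hμ.2, prefixProb, ENNReal.ofReal]
  congr 1
  split_ifs
  · rw [one_mul, Real.toNNReal_prod_of_nonneg fun i _ => step_nonneg _ _ _]
    simp only [step_eq_step_nil h1 h2, stepKernel]
  · simp

end Game

end StochGame

open StochGame in
/-- In a game stopping under fairness, under a memoryless Player 1 strategy and a memoryless
fair Player 2 strategy, the expected time spent in non-terminal vertices is finite:
`Σ_{N=1}^∞ Σ_{ŵ ∈ (V∖T)^N} Prob(ŵ) < ∞`. -/
theorem memoryless_sum_nonterminal_lt_top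
    {V : Type*} [Fintype V] [DecidableEq V] [MeasurableSpace V] [DiscreteMeasurableSpace V]
    (G : StochGame V) (hstop : G.StoppingUnderFairness)
    (σ1 : G.Strategy G.V1) (h1 : σ1.Memoryless)
    (σ2 : G.Strategy G.V2) (h2m : σ2.Memoryless) (h2f : G.Fair σ2)
    (v : V) (μ : Measure (ℕ → V)) (hμ : G.IsPathMeasure σ1 σ2 v μ) :
    (∑' N : ℕ, ∑' w : {w : Fin (N + 1) → V // ∀ i, ¬ G.Terminal (w i)},
      μ {ω : ℕ → V | ∀ i : Fin (N + 1), ω i = w.1 i}) < ⊤ := by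
  have : IsProbabilityMeasure μ := hμ.1
  have hT : ∀ᵐ ω ∂μ, ω ∈ G.ReachT :=
    (ae_mem_iff_measure_eq (measurableSet_reachT G).nullMeasurableSet).2
      (by rw [hstop σ1 σ2 h2f v μ hμ, measure_univ])
  exact (hμ.isMarkovChainFrom h1 h2m).tsum_measure_avoiding_lt_top (T := {t | G.Terminal t})
    (fun a => (sum_stepKernel a).le) hT
end

section
/- Let G be a stochastic game with rewards that is stopping under fairness, and let σ1 ∈ Σ1 be any strategy for Player 1. Then for every vertex v ∈ V, the infimum over all fair strategies σ2 of E^{σ1,σ2}_{G,v}[rew] is finite. -/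
/-!
Player 2 plays round robin: at each of her vertices she cycles through its successors, driven by
a visit counter, so every play consistent with this strategy is fair. Against round robin,
Player 1 faces a finite Markov decision process on vertices × counters (counters taken modulo
`|V| + 1`). Value iteration for the probability of avoiding `T` converges to a fixed point of the
Bellman operator, which a greedy Player 1 strategy attains; since that strategy together with
round robin reaches `T` almost surely, the fixed point is `0`. By finiteness there is one `N` such
that, from every vertex, every Player 1 strategy avoids `T` for `N` steps with probability at
most `1/2`, hence the probability of not being in `T` at step `i` is at most `2^-⌊i/N⌋`. Rewards
vanish on `T`, so the expected total reward is at most `∑ᵤ r(u) · ∑ᵢ 2^-⌊i/N⌋ < ∞`.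
-/

open MeasureTheory
open scoped ENNReal Classical

open Filter Topology

lemma ENNReal.tsum_pow_div_lt_top {a : ℝ≥0∞} (ha : a < 1) {N : ℕ} (hN : 0 < N) :
    ∑' i, a ^ (i / N) < ∞ := by
  have : NeZero N := ⟨hN.ne'⟩
  calc ∑' i, a ^ (i / N) = ∑' p : ℕ × Fin N, a ^ p.1 :=
        (Nat.divModEquiv N).tsum_eq fun p => a ^ p.1
    _ = N * (1 - a)⁻¹ := by
        rw [ENNReal.tsum_prod (f := fun k (_ : Fin N) => a ^ k)]
        simp [ENNReal.tsum_mul_left, ENNReal.tsum_geometric]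
    _ < ∞ := ENNReal.mul_lt_top (ENNReal.natCast_lt_top N)
        (ENNReal.inv_lt_top.2 (tsub_pos_of_lt ha))

namespace StochGame

section Plays

variable {V : Type*}

def restrictPrefix (n : ℕ) (ω : ℕ → V) : Fin (n + 1) → V := fun i => ω i

def extendPrefix {n : ℕ} (t : Fin (n + 1) → V) : ℕ → V := fun i => t ⟨min i n, by omega⟩

lemma extendPrefix_of_le {n i : ℕ} (t : Fin (n + 1) → V) (hi : i ≤ n) :
    extendPrefix t i = t ⟨i, by omega⟩ := by
  simp [extendPrefix, Nat.min_eq_left hi]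

lemma extendPrefix_zero {n : ℕ} (t : Fin (n + 1) → V) : extendPrefix t 0 = t 0 :=
  extendPrefix_of_le t (Nat.zero_le n)

lemma extendPrefix_cons_succ {n : ℕ} (a : V) (s : Fin (n + 1) → V) (i : ℕ) :
    extendPrefix (Fin.cons a s : Fin (n + 2) → V) (i + 1) = extendPrefix s i := by
  simp only [extendPrefix]
  rw [show (⟨min (i + 1) (n + 1), _⟩ : Fin (n + 2)) = Fin.succ ⟨min i n, by omega⟩ from
    Fin.ext (by simp [Nat.succ_min_succ]), Fin.cons_succ]

lemma restrictPrefix_extendPrefix_of_le {n i : ℕ} (ω : ℕ → V) (hi : i ≤ n) :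
    extendPrefix (restrictPrefix n ω) i = ω i := by
  simp [extendPrefix_of_le _ hi, restrictPrefix]

lemma cyl_extendPrefix {n : ℕ} (t : Fin (n + 1) → V) :
    cyl n (extendPrefix t) = restrictPrefix n ⁻¹' {t} := by
  ext ω
  simp only [cyl, Set.mem_preimage, Set.mem_singleton_iff, funext_iff, restrictPrefix,
    Fin.forall_iff, Nat.lt_succ_iff]
  exact forall₂_congr fun i hi => by rw [extendPrefix_of_le t hi]

lemma measurable_restrictPrefix [MeasurableSpace V] (n : ℕ) :
    Measurable (restrictPrefix (V := V) n) :=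
  measurable_pi_lambda _ fun _ => measurable_pi_apply _

lemma hist_zero (w : ℕ → V) : hist w 0 = [] := rfl

lemma hist_congr {ω w : ℕ → V} {j : ℕ} (h : ∀ i < j, ω i = w i) : hist ω j = hist w j :=
  List.map_congr_left fun i hi => h i (List.mem_range.1 hi)

lemma hist_succ (w : ℕ → V) (j : ℕ) : hist w (j + 1) = hist w j ++ [w j] := by
  simp [hist, List.range_succ]

lemma hist_succ' (w : ℕ → V) (j : ℕ) : hist w (j + 1) = w 0 :: hist (fun i => w (i + 1)) j := by
  simp [hist, List.range_succ_eq_map]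

variable [DecidableEq V]

lemma count_hist_add_of_forall_ne {ω : ℕ → V} {u : V} {n d : ℕ}
    (h : ∀ m, n ≤ m → m < n + d → ω m ≠ u) : (hist ω (n + d)).count u = (hist ω n).count u := by
  induction d with
  | zero => rfl
  | succ d ih =>
    rw [← add_assoc, hist_succ, List.count_append, ih fun m hm hm' => h m hm (by omega),
      List.count_singleton, beq_false_of_ne (h _ (by omega) (by omega)), if_neg (by simp), add_zero]

lemma exists_count_hist_eq_add {ω : ℕ → V} {u : V} (hinf : u ∈ infOcc ω) {n₀ : ℕ}
    (h₀ : ω n₀ = u) (j : ℕ) :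
    ∃ n, n₀ ≤ n ∧ ω n = u ∧ (hist ω n).count u = (hist ω n₀).count u + j := by
  induction j with
  | zero => exact ⟨n₀, le_rfl, h₀, rfl⟩
  | succ j ih =>
    obtain ⟨n, hn₀, hn, hcount⟩ := ih
    have hnext : ∃ m, n < m ∧ ω m = u := hinf (n + 1)
    obtain ⟨hm, hmu⟩ := Nat.find_spec hnext
    refine ⟨Nat.find hnext, by omega, hmu, ?_⟩
    rw [← Nat.add_sub_cancel' hm, count_hist_add_of_forall_ne fun k hk hk' hku =>
      Nat.find_min hnext (by omega : k < Nat.find hnext) ⟨by omega, hku⟩, hist_succ,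
      List.count_append, hcount, hn]
    simp [add_assoc]

end Plays

variable {V : Type*} [Fintype V] {G : StochGame V}

section Successors

noncomputable def postFinset (G : StochGame V) (u : V) : Finset V :=
  Finset.univ.filter fun v' => 0 < G.δ u v'

lemma mem_postFinset {u v' : V} : v' ∈ G.postFinset u ↔ 0 < G.δ u v' := by
  simp [postFinset]

lemma postFinset_nonempty (G : StochGame V) (u : V) : (G.postFinset u).Nonempty :=
  let ⟨v', hv'⟩ := G.post_nonempty u
  ⟨v', mem_postFinset.2 hv'⟩

lemma length_toList_postFinset_pos (G : StochGame V) (u : V) :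
    0 < (G.postFinset u).toList.length := by
  simpa using G.postFinset_nonempty u

noncomputable def nthSucc (G : StochGame V) (u : V) (k : ℕ) : V :=
  (G.postFinset u).toList.get ⟨k % _, Nat.mod_lt k (G.length_toList_postFinset_pos u)⟩

lemma nthSucc_pos (G : StochGame V) (u : V) (k : ℕ) : 0 < G.δ u (G.nthSucc u k) :=
  mem_postFinset.1 (Finset.mem_toList.1 (List.get_mem _ _))

lemma exists_nthSucc_val_add_eq {u u' : V} (hu' : 0 < G.δ u u')
    (a : ZMod (Fintype.card V + 1)) : ∃ j : ℕ, G.nthSucc u (a + j).val = u' := by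
  obtain ⟨i, hi⟩ := List.get_of_mem (Finset.mem_toList.2 (mem_postFinset.2 hu'))
  have hiV : (i : ℕ) < Fintype.card V + 1 := Nat.lt_succ_of_lt
    (i.2.trans_le ((Finset.length_toList _).trans_le (Finset.card_le_univ _)))
  refine ⟨((i : ZMod (Fintype.card V + 1)) - a).val, ?_⟩
  rw [ZMod.natCast_zmod_val, add_sub_cancel, ZMod.val_cast_of_lt hiV, nthSucc, ← hi]
  congr
  exact Nat.mod_eq_of_lt i.2

end Successors

section AvoidSet

def avoidSet (G : StochGame V) (n : ℕ) : Set (ℕ → V) := {ω | ∀ i ≤ n, ¬ G.Terminal (ω i)}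

lemma antitone_avoidSet : Antitone G.avoidSet :=
  fun _ _ hnm _ hω i hi => hω i (hi.trans hnm)

lemma iInter_avoidSet : ⋂ n, G.avoidSet n = G.ReachTᶜ := by
  ext ω
  simp only [avoidSet, ReachT, Set.mem_iInter, Set.mem_compl_iff]
  simpa using ⟨fun h i => h i i le_rfl, fun h _ i _ => h i⟩

lemma avoidSet_eq_preimage (n : ℕ) : G.avoidSet n = restrictPrefix n ⁻¹'
    ↑(Finset.univ.filter fun t : Fin (n + 1) → V => ∀ i, ¬ G.Terminal (t i)) := by
  ext ω
  simp [avoidSet, restrictPrefix, Fin.forall_iff]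

variable [MeasurableSpace V] [DiscreteMeasurableSpace V]

lemma measurableSet_avoidSet (n : ℕ) : MeasurableSet (G.avoidSet n) := by
  rw [avoidSet_eq_preimage]
  exact measurable_restrictPrefix n .of_discrete

lemma measurableSet_ReachT : MeasurableSet G.ReachT := by
  rw [← compl_compl G.ReachT, ← iInter_avoidSet]
  exact (MeasurableSet.iInter measurableSet_avoidSet).compl

lemma expRew_le_mul_tsum (μ : Measure (ℕ → V)) {r : V → ℝ}
    (hrT : ∀ u, G.Terminal u → r u = 0) :
    expRew μ r ≤ (∑ u, ENNReal.ofReal (r u)) * ∑' i, μ {ω | ¬ G.Terminal (ω i)} := by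
  simp only [expRew, rew, ← ENNReal.tsum_mul_left]
  rw [lintegral_tsum (f := fun (i : ℕ) (ω : ℕ → V) => ENNReal.ofReal (r (ω i))) fun i =>
    ((Measurable.of_discrete (f := fun u => ENNReal.ofReal (r u))).comp
      (measurable_pi_apply i)).aemeasurable]
  refine ENNReal.tsum_le_tsum fun i => ?_
  have hs : MeasurableSet {ω : ℕ → V | ¬ G.Terminal (ω i)} :=
    (MeasurableSet.of_discrete (s := {u | ¬ G.Terminal u})).preimage (measurable_pi_apply i)
  rw [← lintegral_indicator_const hs]
  refine lintegral_mono fun ω => ?_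
  by_cases hT : G.Terminal (ω i)
  · simp [hrT _ hT]
  · rw [Set.indicator_of_mem hT]
    exact Finset.single_le_sum (f := fun u => ENNReal.ofReal (r u)) (fun _ _ => zero_le)
      (Finset.mem_univ _)

end AvoidSet

section Strategies

/-- Round robin needs every successor index to be below the counter modulus, and bounded counters
keep the product of the game with the counters finite. -/
abbrev Counter (V : Type*) [Fintype V] := V → ZMod (Fintype.card V + 1)

variable {P : Finset V}

def Strategy.shift (σ : Strategy G P) (v : V) : Strategy G P where
  f h := σ.f (v :: h)
  nonneg h := σ.nonneg (v :: h)
  sum_one h := σ.sum_one (v :: h)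
  support h := σ.support (v :: h)

variable [DecidableEq V]

def Strategy.ofChoice (g : List V → V → V) (hg : ∀ h u, u ∈ P → 0 < G.δ u (g h u)) :
    Strategy G P where
  f h u u' := if u' = g h u then 1 else 0
  nonneg h u u' := by split <;> norm_num
  sum_one h u := by simp
  support h u hu u' hpos := by
    obtain rfl : u' = g h u := by by_contra hne; simp [hne] at hpos
    exact hg h u hu

variable {g : List V → V → V} {hg : ∀ h u, u ∈ P → 0 < G.δ u (g h u)}

lemma Strategy.sum_ofChoice_mul (h : List V) (u : V) (y : V → ℝ) :
    ∑ v', (Strategy.ofChoice g hg).f h u v' * y v' = y (g h u) := by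
  simp [Strategy.ofChoice]

lemma Strategy.eq_of_ofChoice_pos {h : List V} {u u' : V}
    (hpos : 0 < (Strategy.ofChoice g hg).f h u u') : u' = g h u := by
  by_contra hne; simp [Strategy.ofChoice, hne] at hpos

/-- Folding from the left makes `(roundRobin c).shift v` and `(greedy x c).shift v` definitionally
`roundRobin (c + Pi.single v 1)` and `greedy x (c + Pi.single v 1)`, which the recursions below
rely on. -/
def Counter.advance (c : Counter V) (h : List V) : Counter V :=
  h.foldl (fun c v => c + Pi.single v 1) c

lemma Counter.advance_apply (c : Counter V) (h : List V) (u : V) :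
    c.advance h u = c u + h.count u := by
  induction h generalizing c with
  | nil => simp [advance]
  | cons v h ih =>
    rw [advance, List.foldl_cons, ← advance, ih, List.count_cons]
    by_cases huv : u = v
    · subst huv
      simp only [Pi.add_apply, Pi.single_eq_same, beq_self_eq_true, if_true]
      push_cast
      ring
    · simp [huv, Ne.symm huv]

noncomputable def roundRobin (G : StochGame V) (c : Counter V) : Strategy G G.V2 :=
  .ofChoice (fun h u => G.nthSucc u (c.advance h u).val) fun _ _ _ => G.nthSucc_pos _ _

end Strategies

variable [DecidableEq V]

section Step

variable {σ1 : Strategy G G.V1} {σ2 : Strategy G G.V2} {h : List V} {v v' : V}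

lemma step_of_mem_V1 (hv : v ∈ G.V1) : G.step σ1 σ2 h v v' = σ1.f h v v' := if_pos hv

lemma step_of_mem_V2 (hv : v ∈ G.V2) : G.step σ1 σ2 h v v' = σ2.f h v v' := by
  rw [step, if_neg fun h1 => G.disj12 v ⟨h1, hv⟩, if_pos hv]

lemma step_of_not_mem (h1 : v ∉ G.V1) (h2 : v ∉ G.V2) : G.step σ1 σ2 h v v' = G.δ v v' := by
  rw [step, if_neg h1, if_neg h2]

lemma step_nonneg_s10 : 0 ≤ G.step σ1 σ2 h v v' := by
  unfold step
  split_ifs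
  exacts [σ1.nonneg .., σ2.nonneg .., G.δ_nonneg ..]

lemma step_sum_one : ∑ v', G.step σ1 σ2 h v v' = 1 := by
  by_cases h1 : v ∈ G.V1
  · simp only [step_of_mem_V1 h1, σ1.sum_one]
  by_cases h2 : v ∈ G.V2
  · simp only [step_of_mem_V2 h2, σ2.sum_one]
  simp only [step_of_not_mem h1 h2]
  exact G.prob v (((G.cover v).resolve_left h1).resolve_left h2)

lemma step_shift : G.step (σ1.shift v) (σ2.shift v) h = G.step σ1 σ2 (v :: h) := rfl

lemma eq_of_step_pos_of_terminal (ht : G.Terminal v) (hpos : 0 < G.step σ1 σ2 h v v') :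
    v' = v := by
  by_contra hne
  have hδ : G.δ v v' = 0 := ht.2 v' hne
  unfold step at hpos
  split_ifs at hpos with h1 h2
  · exact (σ1.support h v h1 v' hpos).ne' hδ
  · exact (σ2.support h v h2 v' hpos).ne' hδ
  · exact hpos.ne' hδ

end Step

noncomputable def avoidProb (G : StochGame V) :
    ℕ → Strategy G G.V1 → Strategy G G.V2 → V → ℝ
  | 0, _, _, v => if G.Terminal v then 0 else 1
  | n + 1, σ1, σ2, v => if G.Terminal v then 0 else
      ∑ v', G.step σ1 σ2 [] v v' * avoidProb G n (σ1.shift v) (σ2.shift v) v'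

lemma avoidProb_of_terminal (n : ℕ) (σ1 : Strategy G G.V1) (σ2 : Strategy G G.V2) {v : V}
    (hv : G.Terminal v) : G.avoidProb n σ1 σ2 v = 0 := by
  cases n <;> simp [avoidProb, hv]

section PrefixProb

variable {σ1 : Strategy G G.V1} {σ2 : Strategy G G.V2} {v : V} {n : ℕ}

lemma prefixProb_congr {ω w : ℕ → V} (h : ∀ i ≤ n, ω i = w i) :
    G.prefixProb σ1 σ2 v n ω = G.prefixProb σ1 σ2 v n w := by
  unfold prefixProb
  rw [h 0 (Nat.zero_le n)]
  refine congrArg _ (Finset.prod_congr rfl fun i hi => ?_)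
  have hi := Finset.mem_range.1 hi
  rw [hist_congr fun j hj => h j (by omega), h i (by omega), h (i + 1) hi]

lemma prefixProb_nonneg (w : ℕ → V) : 0 ≤ G.prefixProb σ1 σ2 v n w :=
  mul_nonneg (by split <;> norm_num) (Finset.prod_nonneg fun _ _ => step_nonneg_s10)

lemma prefixProb_succ (w : ℕ → V) :
    G.prefixProb σ1 σ2 v (n + 1) w = (if w 0 = v then 1 else 0) *
      (G.step σ1 σ2 [] (w 0) (w 1) *
        G.prefixProb (σ1.shift (w 0)) (σ2.shift (w 0)) (w 1) n fun i => w (i + 1)) := by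
  simp [prefixProb, Finset.prod_range_succ' _ n, hist_zero, hist_succ', step_shift, mul_comm]

lemma prefixProb_extendPrefix_cons (a : V) (s : Fin (n + 1) → V) :
    G.prefixProb σ1 σ2 v (n + 1) (extendPrefix (Fin.cons a s : Fin (n + 2) → V)) =
      (if a = v then 1 else 0) * (G.step σ1 σ2 [] a (s 0) *
        G.prefixProb (σ1.shift a) (σ2.shift a) (s 0) n (extendPrefix s)) := by
  have hs1 : extendPrefix (Fin.cons a s : Fin (n + 2) → V) 1 = s 0 := by
    rw [extendPrefix_cons_succ a s 0, extendPrefix_zero]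
  rw [prefixProb_succ, extendPrefix_zero, hs1, funext (extendPrefix_cons_succ a s), Fin.cons_zero]

lemma sum_mul_prefixProb (w : ℕ → V) (y : V → ℝ) :
    ∑ v', y v' * G.prefixProb σ1 σ2 v' n w = y (w 0) * G.prefixProb σ1 σ2 (w 0) n w := by
  simp [prefixProb]

lemma sum_prefixProb_avoid (n : ℕ) (σ1 : Strategy G G.V1) (σ2 : Strategy G G.V2) (v : V) :
    ∑ t : Fin (n + 1) → V, (if ∀ i, ¬ G.Terminal (t i) then
      G.prefixProb σ1 σ2 v n (extendPrefix t) else 0) = G.avoidProb n σ1 σ2 v := by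
  induction n generalizing σ1 σ2 v with
  | zero =>
    rw [← (Equiv.funUnique (Fin 1) V).symm.sum_comp,
      Finset.sum_eq_single v (fun u _ hu => by simp [prefixProb, extendPrefix_zero, hu]) (by simp)]
    simp [prefixProb, avoidProb, extendPrefix_zero]
  | succ n ih =>
    have hterm : ∀ a (s : Fin (n + 1) → V),
        (if ∀ i, ¬ G.Terminal ((Fin.cons a s : Fin (n + 2) → V) i) then
          G.prefixProb σ1 σ2 v (n + 1) (extendPrefix (Fin.cons a s)) else 0) =
        if a = v then (if G.Terminal v then 0 else G.step σ1 σ2 [] v (s 0) *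
          if ∀ i, ¬ G.Terminal (s i) then
            G.prefixProb (σ1.shift v) (σ2.shift v) (s 0) n (extendPrefix s) else 0) else 0 := by
      intro a s
      rw [prefixProb_extendPrefix_cons]
      simp only [Fin.forall_fin_succ (P := fun i => ¬ G.Terminal _), Fin.cons_zero, Fin.cons_succ]
      split_ifs <;> simp_all
    have hsum : ∀ s : Fin (n + 1) → V, ∑ v', G.step σ1 σ2 [] v v' *
        (if ∀ i, ¬ G.Terminal (s i) then
          G.prefixProb (σ1.shift v) (σ2.shift v) v' n (extendPrefix s) else 0) =
        G.step σ1 σ2 [] v (s 0) * if ∀ i, ¬ G.Terminal (s i) then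
          G.prefixProb (σ1.shift v) (σ2.shift v) (s 0) n (extendPrefix s) else 0 := by
      intro s
      split_ifs
      · rw [sum_mul_prefixProb, extendPrefix_zero]
      · simp
    rw [← (Fin.consEquiv fun _ => V).sum_comp, Fintype.sum_prod_type]
    change ∑ a, ∑ s, (if ∀ i, ¬ G.Terminal ((Fin.cons a s : Fin (n + 2) → V) i) then
      G.prefixProb σ1 σ2 v (n + 1) (extendPrefix (Fin.cons a s)) else 0) = _
    simp_rw [hterm]
    rw [Finset.sum_eq_single v (fun a _ ha => by simp [ha]) (by simp), avoidProb]
    simp only [if_true]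
    split_ifs
    · simp
    · simp only [← ih, Finset.mul_sum]
      rw [Finset.sum_comm]
      exact Finset.sum_congr rfl fun s _ => (hsum s).symm

lemma step_pos_of_prefixProb_ne_zero {ω : ℕ → V} (h : G.prefixProb σ1 σ2 v n ω ≠ 0) {j : ℕ}
    (hj : j < n) : 0 < G.step σ1 σ2 (hist ω j) (ω j) (ω (j + 1)) := by
  refine step_nonneg_s10.lt_of_ne fun h0 => h ?_
  rw [prefixProb, Finset.prod_eq_zero (Finset.mem_range.2 hj) h0.symm, mul_zero]

lemma mem_avoidSet_of_prefixProb_ne_zero {ω : ℕ → V} (h : G.prefixProb σ1 σ2 v n ω ≠ 0)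
    (hn : ¬ G.Terminal (ω n)) : ω ∈ G.avoidSet n := by
  intro i hi hTi
  have hstay : ∀ d, i + d ≤ n → ω (i + d) = ω i := by
    intro d
    induction d with
    | zero => simp
    | succ d ih =>
      intro hd
      rw [← add_assoc, eq_of_step_pos_of_terminal (by rwa [ih (by omega)])
        (step_pos_of_prefixProb_ne_zero h (by omega)), ih (by omega)]
  exact hn (by rwa [← Nat.add_sub_cancel' hi, hstay _ (by omega)])

end PrefixProb

section PathMeasure

variable [MeasurableSpace V] [DiscreteMeasurableSpace V]
  {σ1 : Strategy G G.V1} {σ2 : Strategy G G.V2} {v : V} {μ : Measure (ℕ → V)}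

lemma IsPathMeasure.measure_restrictPrefix_preimage (hμ : G.IsPathMeasure σ1 σ2 v μ) {n : ℕ}
    (s : Finset (Fin (n + 1) → V)) : μ (restrictPrefix n ⁻¹' ↑s) =
      ∑ t ∈ s, ENNReal.ofReal (G.prefixProb σ1 σ2 v n (extendPrefix t)) := by
  rw [← Set.biUnion_preimage_singleton, Finset.set_biUnion_coe, measure_biUnion_finset
    (fun t _ t' _ hne => Set.disjoint_singleton.2 hne |>.preimage _)
    fun t _ => measurable_restrictPrefix n (measurableSet_singleton t)]
  exact Finset.sum_congr rfl fun t _ => by rw [← cyl_extendPrefix, hμ.2]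

lemma IsPathMeasure.measure_avoidSet (hμ : G.IsPathMeasure σ1 σ2 v μ) (n : ℕ) :
    μ (G.avoidSet n) = ENNReal.ofReal (G.avoidProb n σ1 σ2 v) := by
  rw [avoidSet_eq_preimage, hμ.measure_restrictPrefix_preimage, ← sum_prefixProb_avoid,
    ← Finset.sum_filter, ENNReal.ofReal_sum_of_nonneg fun _ _ => prefixProb_nonneg _]

lemma IsPathMeasure.ae_prefixProb_ne_zero (hμ : G.IsPathMeasure σ1 σ2 v μ) :
    ∀ᵐ ω ∂μ, ∀ n, G.prefixProb σ1 σ2 v n ω ≠ 0 := by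
  refine ae_all_iff.2 fun n => measure_eq_zero_iff_ae_notMem.1 ?_
  have hnull : {ω | G.prefixProb σ1 σ2 v n ω = 0} = restrictPrefix n ⁻¹'
      ↑(Finset.univ.filter fun t : Fin (n + 1) → V =>
        G.prefixProb σ1 σ2 v n (extendPrefix t) = 0) := by
    ext ω
    simp [prefixProb_congr fun i hi => restrictPrefix_extendPrefix_of_le ω hi]
  change μ {ω | G.prefixProb σ1 σ2 v n ω = 0} = 0
  rw [hnull, hμ.measure_restrictPrefix_preimage]
  exact Finset.sum_eq_zero fun t ht => by simp [(Finset.mem_filter.1 ht).2]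

lemma IsPathMeasure.measure_not_terminal_le (hμ : G.IsPathMeasure σ1 σ2 v μ) (n : ℕ) :
    μ {ω | ¬ G.Terminal (ω n)} ≤ μ (G.avoidSet n) :=
  measure_mono_ae <| hμ.ae_prefixProb_ne_zero.mono fun _ hω hn =>
    mem_avoidSet_of_prefixProb_ne_zero (hω n) hn

end PathMeasure

lemma mem_FP2_of_step_roundRobin_pos {σ1 : Strategy G G.V1} {c : Counter V} {ω : ℕ → V}
    (hω : ∀ j, 0 < G.step σ1 (G.roundRobin c) (hist ω j) (ω j) (ω (j + 1))) : ω ∈ G.FP2 := by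
  intro u hu hinf u' hu' N
  obtain ⟨n₀, hn₀, h₀⟩ := hinf N
  obtain ⟨j, hj⟩ := exists_nthSucc_val_add_eq hu' (c u + (hist ω n₀).count u)
  obtain ⟨n, hn, hnu, hcount⟩ := exists_count_hist_eq_add hinf h₀ j
  have hstep := hω n
  rw [hnu, step_of_mem_V2 hu] at hstep
  refine ⟨n + 1, by omega, ?_⟩
  rw [Strategy.eq_of_ofChoice_pos hstep, Counter.advance_apply, hcount, Nat.cast_add, ← add_assoc,
    hj]

lemma roundRobin_fair [MeasurableSpace V] [DiscreteMeasurableSpace V] (c : Counter V) :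
    G.Fair (G.roundRobin c) := by
  intro σ1 v μ hμ
  have := hμ.1
  rw [measure_congr (ae_eq_univ.2 ?_), measure_univ]
  refine measure_eq_zero_iff_ae_notMem.2 (hμ.ae_prefixProb_ne_zero.mono fun ω hω => ?_)
  exact not_not.2 (mem_FP2_of_step_roundRobin_pos fun j =>
    step_pos_of_prefixProb_ne_zero (hω (j + 1)) (Nat.lt_succ_self j))

section ValueIteration

/-- Bellman operator, on the product of `G` with the round-robin counters, of Player 1 maximising
the probability of avoiding `T`. -/
noncomputable def avoidOp (G : StochGame V) (x : V → Counter V → ℝ) (v : V) (c : Counter V) :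
    ℝ :=
  if G.Terminal v then 0
  else if v ∈ G.V1 then
    (G.postFinset v).sup' (G.postFinset_nonempty v) fun v' => x v' (c + Pi.single v 1)
  else if v ∈ G.V2 then x (G.nthSucc v (c v).val) (c + Pi.single v 1)
  else ∑ v', G.δ v v' * x v' (c + Pi.single v 1)

lemma avoidOp_of_terminal (x : V → Counter V → ℝ) {v : V} (hv : G.Terminal v) (c : Counter V) :
    G.avoidOp x v c = 0 :=
  if_pos hv

lemma monotone_avoidOp : Monotone G.avoidOp := by
  intro x y hxy v c
  unfold avoidOp
  split_ifs
  · exact le_rfl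
  · exact Finset.sup'_mono_fun fun v' _ => hxy v' _
  · exact hxy _ _
  · exact Finset.sum_le_sum fun v' _ => mul_le_mul_of_nonneg_left (hxy v' _) (G.δ_nonneg _ _)

lemma avoidOp_mem_Icc {x : V → Counter V → ℝ} (hx : x ∈ Set.Icc 0 1) :
    G.avoidOp x ∈ Set.Icc 0 1 := by
  have hx0 : ∀ v c, 0 ≤ x v c := hx.1
  have hx1 : ∀ v c, x v c ≤ 1 := hx.2
  refine ⟨fun v c => ?_, fun v c => ?_⟩ <;> simp only [Pi.zero_apply, Pi.one_apply] <;>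
    unfold avoidOp <;> split_ifs with hT h1 h2
  · exact le_rfl
  · exact (hx0 _ _).trans (Finset.le_sup' (fun v' => x v' (c + Pi.single v 1))
      (G.postFinset_nonempty v).choose_spec)
  · exact hx0 _ _
  · exact Finset.sum_nonneg fun v' _ => mul_nonneg (G.δ_nonneg _ _) (hx0 _ _)
  · exact zero_le_one
  · exact Finset.sup'_le _ _ fun v' _ => hx1 _ _
  · exact hx1 _ _
  · calc ∑ v', G.δ v v' * x v' (c + Pi.single v 1) ≤ ∑ v', G.δ v v' :=
          Finset.sum_le_sum fun v' _ => mul_le_of_le_one_right (G.δ_nonneg _ _) (hx1 _ _)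
      _ = 1 := G.prob v (((G.cover v).resolve_left h1).resolve_left h2)

lemma continuous_avoidOp : Continuous G.avoidOp := by
  refine continuous_pi fun v => continuous_pi fun c => ?_
  unfold avoidOp
  split_ifs
  · exact continuous_const
  · exact Continuous.finset_sup'_apply _ fun v' _ =>
      (continuous_apply _).comp (continuous_apply v')
  · exact (continuous_apply _).comp (continuous_apply _)
  · exact continuous_finsetSum _ fun v' _ =>
      continuous_const.mul ((continuous_apply _).comp (continuous_apply v'))

noncomputable def greedySucc (x : V → Counter V → ℝ) (v : V) (c : Counter V) : V :=
  ((G.postFinset v).exists_max_image (fun v' => x v' (c + Pi.single v 1))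
    (G.postFinset_nonempty v)).choose

lemma greedySucc_mem (x : V → Counter V → ℝ) (v : V) (c : Counter V) :
    G.greedySucc x v c ∈ G.postFinset v :=
  ((G.postFinset v).exists_max_image _ (G.postFinset_nonempty v)).choose_spec.1

lemma le_greedySucc (x : V → Counter V → ℝ) (v : V) (c : Counter V) {v' : V}
    (hv' : v' ∈ G.postFinset v) :
    x v' (c + Pi.single v 1) ≤ x (G.greedySucc x v c) (c + Pi.single v 1) :=
  ((G.postFinset v).exists_max_image (fun v' => x v' (c + Pi.single v 1))
    (G.postFinset_nonempty v)).choose_spec.2 v' hv'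

lemma sup'_eq_greedySucc (x : V → Counter V → ℝ) (v : V) (c : Counter V) :
    (G.postFinset v).sup' (G.postFinset_nonempty v) (fun v' => x v' (c + Pi.single v 1)) =
      x (G.greedySucc x v c) (c + Pi.single v 1) :=
  le_antisymm (Finset.sup'_le _ _ fun _ => G.le_greedySucc x v c)
    (Finset.le_sup' (fun v' => x v' (c + Pi.single v 1)) (G.greedySucc_mem x v c))

noncomputable def greedy (G : StochGame V) (x : V → Counter V → ℝ) (c : Counter V) :
    Strategy G G.V1 :=
  .ofChoice (fun h u => G.greedySucc x u (c.advance h)) fun _ _ _ =>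
    mem_postFinset.1 (G.greedySucc_mem _ _ _)

variable {σ1 : Strategy G G.V1} {c : Counter V} {v : V}

lemma sum_step_roundRobin_le_avoidOp {x : V → Counter V → ℝ} {y : V → ℝ}
    (hy : ∀ v', y v' ≤ x v' (c + Pi.single v 1)) (hT : ¬ G.Terminal v) :
    ∑ v', G.step σ1 (G.roundRobin c) [] v v' * y v' ≤ G.avoidOp x v c := by
  rw [avoidOp, if_neg hT]
  split_ifs with h1 h2
  · simp only [step_of_mem_V1 h1]
    calc ∑ v', σ1.f [] v v' * y v'
        ≤ ∑ v', σ1.f [] v v' * (G.postFinset v).sup' (G.postFinset_nonempty v)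
            fun v' => x v' (c + Pi.single v 1) := by
          refine Finset.sum_le_sum fun v' _ => ?_
          rcases (σ1.nonneg [] v v').eq_or_lt with h0 | hpos
          · simp [← h0]
          · exact mul_le_mul_of_nonneg_left ((hy v').trans (Finset.le_sup'
              (fun v' => x v' (c + Pi.single v 1)) (mem_postFinset.2 (σ1.support [] v h1 v' hpos))))
              hpos.le
      _ = _ := by rw [← Finset.sum_mul, σ1.sum_one, one_mul]
  · simp only [step_of_mem_V2 h2, roundRobin, Strategy.sum_ofChoice_mul]
    exact hy _
  · simp only [step_of_not_mem h1 h2]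
    exact Finset.sum_le_sum fun v' _ => mul_le_mul_of_nonneg_left (hy v') (G.δ_nonneg _ _)

lemma avoidOp_eq_sum_step_greedy (x : V → Counter V → ℝ) (hT : ¬ G.Terminal v) :
    G.avoidOp x v c =
      ∑ v', G.step (G.greedy x c) (G.roundRobin c) [] v v' * x v' (c + Pi.single v 1) := by
  rw [avoidOp, if_neg hT]
  split_ifs with h1 h2
  · simp only [step_of_mem_V1 h1, greedy, Strategy.sum_ofChoice_mul, sup'_eq_greedySucc]
    rfl
  · simp only [step_of_mem_V2 h2, roundRobin, Strategy.sum_ofChoice_mul]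
    rfl
  · simp only [step_of_not_mem h1 h2]

lemma avoidProb_roundRobin_le_iterate (n : ℕ) (σ1 : Strategy G G.V1) (c : Counter V) (v : V) :
    G.avoidProb n σ1 (G.roundRobin c) v ≤ (G.avoidOp^[n + 1] 1) v c := by
  induction n generalizing σ1 c v with
  | zero =>
    by_cases hT : G.Terminal v
    · simp [avoidProb, hT, avoidOp_of_terminal]
    · simpa [avoidProb, hT, step_sum_one] using
        sum_step_roundRobin_le_avoidOp (σ1 := σ1) (x := 1) (y := 1) (fun _ => le_rfl) hT
  | succ n ih =>
    rw [Function.iterate_succ_apply', avoidProb]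
    split_ifs with hT
    · rw [avoidOp_of_terminal _ hT]
    · exact sum_step_roundRobin_le_avoidOp (fun v' => ih _ _ v') hT

lemma avoidOp_iterate_mem_Icc (n : ℕ) : G.avoidOp^[n] 1 ∈ Set.Icc 0 1 :=
  Set.MapsTo.iterate (fun _ => avoidOp_mem_Icc) n ⟨zero_le_one, le_rfl⟩

lemma antitone_avoidOp_iterate : Antitone fun n => G.avoidOp^[n] 1 :=
  monotone_avoidOp.antitone_iterate_of_map_le (avoidOp_mem_Icc ⟨zero_le_one, le_rfl⟩).2

noncomputable def avoidLimit (G : StochGame V) : V → Counter V → ℝ := ⨅ n, G.avoidOp^[n] 1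

lemma tendsto_avoidOp_iterate :
    Tendsto (fun n => G.avoidOp^[n] 1) atTop (𝓝 G.avoidLimit) :=
  tendsto_atTop_ciInf antitone_avoidOp_iterate ⟨0, Set.forall_mem_range.2 fun n =>
    (avoidOp_iterate_mem_Icc n).1⟩

lemma avoidOp_avoidLimit : G.avoidOp G.avoidLimit = G.avoidLimit :=
  tendsto_nhds_unique ((continuous_avoidOp.tendsto _).comp tendsto_avoidOp_iterate)
    (by simpa only [Function.iterate_succ_apply', Function.comp_def] using
      (tendsto_add_atTop_iff_nat 1).2 (tendsto_avoidOp_iterate (G := G)))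

lemma avoidLimit_mem_Icc : G.avoidLimit ∈ Set.Icc 0 1 :=
  isClosed_Icc.mem_of_tendsto tendsto_avoidOp_iterate (Eventually.of_forall avoidOp_iterate_mem_Icc)

lemma avoidLimit_le_avoidProb_greedy (n : ℕ) (c : Counter V) (v : V) :
    G.avoidLimit v c ≤ G.avoidProb n (G.greedy G.avoidLimit c) (G.roundRobin c) v := by
  induction n generalizing c v with
  | zero =>
    conv_lhs => rw [← avoidOp_avoidLimit]
    rw [avoidProb]
    split_ifs with hT
    · rw [avoidOp_of_terminal _ hT]
    · exact (avoidOp_mem_Icc avoidLimit_mem_Icc).2 v c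
  | succ n ih =>
    conv_lhs => rw [← avoidOp_avoidLimit]
    rw [avoidProb]
    split_ifs with hT
    · rw [avoidOp_of_terminal _ hT]
    rw [avoidOp_eq_sum_step_greedy _ hT]
    exact Finset.sum_le_sum fun v' _ => mul_le_mul_of_nonneg_left (ih _ _) step_nonneg_s10

end ValueIteration

lemma avoidProb_roundRobin_add_le {N : ℕ} {b : ℝ}
    (hb : ∀ σ1 c v, G.avoidProb N σ1 (G.roundRobin c) v ≤ b) (m : ℕ) (σ1 : Strategy G G.V1)
    (c : Counter V) (v : V) :
    G.avoidProb (m + N) σ1 (G.roundRobin c) v ≤ b * G.avoidProb m σ1 (G.roundRobin c) v := by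
  induction m generalizing σ1 c v with
  | zero =>
    by_cases hT : G.Terminal v
    · simp [avoidProb_of_terminal _ _ _ hT]
    · simpa [avoidProb, hT] using hb σ1 c v
  | succ m ih =>
    rw [show m + 1 + N = m + N + 1 by omega, avoidProb, avoidProb]
    split_ifs
    · simp
    · rw [Finset.mul_sum]
      exact Finset.sum_le_sum fun v' _ =>
        (mul_le_mul_of_nonneg_left (ih _ _ v') step_nonneg_s10).trans_eq (mul_left_comm _ _ _)

lemma avoidProb_roundRobin_mul_le {N : ℕ} {b : ℝ} (hb0 : 0 ≤ b)
    (hb : ∀ σ1 c v, G.avoidProb N σ1 (G.roundRobin c) v ≤ b) (k : ℕ) (σ1 : Strategy G G.V1)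
    (c : Counter V) (v : V) : G.avoidProb (k * N) σ1 (G.roundRobin c) v ≤ b ^ k := by
  induction k with
  | zero => simp only [zero_mul, avoidProb, pow_zero]; split_ifs <;> norm_num
  | succ k ih =>
    rw [Nat.succ_mul, pow_succ']
    exact (avoidProb_roundRobin_add_le hb _ _ _ _).trans (mul_le_mul_of_nonneg_left ih hb0)

section Stopping

variable [MeasurableSpace V] [DiscreteMeasurableSpace V]
  (P : Strategy G G.V1 → Strategy G G.V2 → V → Measure (ℕ → V))

lemma avoidLimit_eq_zero (hP : ∀ σ1 σ2 w, G.IsPathMeasure σ1 σ2 w (P σ1 σ2 w))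
    (hstop : G.StoppingUnderFairness) : G.avoidLimit = 0 := by
  funext v c
  set μ := P (G.greedy G.avoidLimit c) (G.roundRobin c) v
  have hμ : G.IsPathMeasure _ _ v μ := hP _ _ v
  have := hμ.1
  have hnever : ⨅ n, μ (G.avoidSet n) = 0 := by
    rw [← antitone_avoidSet.measure_iInter (fun n => (measurableSet_avoidSet n).nullMeasurableSet)
      ⟨0, measure_ne_top _ _⟩, iInter_avoidSet, measure_compl measurableSet_ReachT
      (measure_ne_top _ _), hstop _ _ (roundRobin_fair c) v μ hμ, measure_univ, tsub_self]
  have hbound : ∀ n, ENNReal.ofReal (G.avoidLimit v c) ≤ μ (G.avoidSet n) := fun n => by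
    rw [hμ.measure_avoidSet]
    exact ENNReal.ofReal_le_ofReal (avoidLimit_le_avoidProb_greedy n c v)
  have hle : ENNReal.ofReal (G.avoidLimit v c) ≤ 0 := hnever ▸ le_iInf hbound
  exact le_antisymm (ENNReal.ofReal_eq_zero.1 (nonpos_iff_eq_zero.1 hle)) (avoidLimit_mem_Icc.1 v c)

lemma exists_avoidProb_roundRobin_le_half (hP : ∀ σ1 σ2 w, G.IsPathMeasure σ1 σ2 w (P σ1 σ2 w))
    (hstop : G.StoppingUnderFairness) :
    ∃ N, 0 < N ∧ ∀ σ1 c v, G.avoidProb N σ1 (G.roundRobin c) v ≤ 2⁻¹ := by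
  have hlim := avoidLimit_eq_zero P hP hstop ▸ tendsto_avoidOp_iterate (G := G)
  have hev : ∀ᶠ n in atTop, ∀ v c, (G.avoidOp^[n] 1) v c ≤ 2⁻¹ :=
    eventually_all.2 fun v => eventually_all.2 fun c =>
      (tendsto_pi_nhds.1 (tendsto_pi_nhds.1 hlim v) c).eventually_le_const (by norm_num)
  obtain ⟨N, hN⟩ := hev.exists_forall_of_atTop
  exact ⟨N + 1, N.succ_pos, fun σ1 c v =>
    (avoidProb_roundRobin_le_iterate _ σ1 c v).trans (hN _ (by omega) v c)⟩

lemma exists_measure_not_terminal_roundRobin_le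
    (hP : ∀ σ1 σ2 w, G.IsPathMeasure σ1 σ2 w (P σ1 σ2 w)) (hstop : G.StoppingUnderFairness) :
    ∃ N, 0 < N ∧ ∀ σ1 c v i, P σ1 (G.roundRobin c) v {ω | ¬ G.Terminal (ω i)} ≤ 2⁻¹ ^ (i / N) := by
  obtain ⟨N, hN, hhalf⟩ := exists_avoidProb_roundRobin_le_half P hP hstop
  refine ⟨N, hN, fun σ1 c v i => ?_⟩
  have hμ := hP σ1 (G.roundRobin c) v
  calc P σ1 (G.roundRobin c) v {ω | ¬ G.Terminal (ω i)}
      ≤ P σ1 (G.roundRobin c) v (G.avoidSet (i / N * N)) :=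
        (hμ.measure_not_terminal_le i).trans
          (measure_mono (antitone_avoidSet (Nat.div_mul_le_self i N)))
    _ = ENNReal.ofReal (G.avoidProb (i / N * N) σ1 (G.roundRobin c) v) := hμ.measure_avoidSet _
    _ ≤ ENNReal.ofReal (2⁻¹ ^ (i / N)) :=
        ENNReal.ofReal_le_ofReal (avoidProb_roundRobin_mul_le (by norm_num) hhalf _ σ1 c v)
    _ = 2⁻¹ ^ (i / N) := by
        rw [ENNReal.ofReal_pow (by norm_num), ENNReal.ofReal_inv_of_pos two_pos,
          ENNReal.ofReal_ofNat]

end Stopping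

end StochGame

open StochGame in
theorem iInf_fair_expRew_lt_top_general
    {V : Type*} [Fintype V] [DecidableEq V] [MeasurableSpace V] [DiscreteMeasurableSpace V]
    (G : StochGame V)
    (P : G.Strategy G.V1 → G.Strategy G.V2 → V → Measure (ℕ → V))
    (hP : ∀ σ1 σ2 w, G.IsPathMeasure σ1 σ2 w (P σ1 σ2 w))
    (r : V → ℝ) (hrT : ∀ u, G.Terminal u → r u = 0)
    (hstop : G.StoppingUnderFairness)
    (σ1 : G.Strategy G.V1) (v : V) :
    (⨅ σ2 : {σ2 : G.Strategy G.V2 // G.Fair σ2}, expRew (P σ1 σ2.1 v) r) < ⊤ := by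
  obtain ⟨N, hN, htail⟩ := exists_measure_not_terminal_roundRobin_le P hP hstop
  calc (⨅ σ2 : {σ2 : G.Strategy G.V2 // G.Fair σ2}, expRew (P σ1 σ2.1 v) r)
      ≤ expRew (P σ1 (G.roundRobin 0) v) r := iInf_le_of_le ⟨_, roundRobin_fair 0⟩ le_rfl
    _ ≤ (∑ u, ENNReal.ofReal (r u)) * ∑' i, 2⁻¹ ^ (i / N) :=
        (expRew_le_mul_tsum _ hrT).trans (by gcongr with i; exact htail σ1 0 v i)
    _ < ⊤ := ENNReal.mul_lt_top (ENNReal.sum_lt_top.2 fun _ _ => ENNReal.ofReal_lt_top)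
        (ENNReal.tsum_pow_div_lt_top (by norm_num) hN)

open StochGame in
/-- In a game with rewards that is stopping under fairness, for any Player 1 strategy the
infimum over fair Player 2 strategies of the expected total reward is finite. -/
theorem iInf_fair_expRew_lt_top
    {V : Type*} [Fintype V] [DecidableEq V] [MeasurableSpace V] [DiscreteMeasurableSpace V]
    (G : StochGame V)
    (P : G.Strategy G.V1 → G.Strategy G.V2 → V → Measure (ℕ → V))
    (hP : ∀ σ1 σ2 w, G.IsPathMeasure σ1 σ2 w (P σ1 σ2 w))
    (r : V → ℝ) (hr0 : ∀ u, 0 ≤ r u) (hrT : ∀ u, G.Terminal u → r u = 0)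
    (hstop : G.StoppingUnderFairness)
    (σ1 : G.Strategy G.V1) (v : V) :
    (⨅ σ2 : {σ2 : G.Strategy G.V2 // G.Fair σ2}, expRew (P σ1 σ2.1 v) r) < ⊤ :=
  iInf_fair_expRew_lt_top_general G P hP r hrT hstop σ1 v
end
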